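/- Let R be an integral domain and m a positive integer. If h(t) ∈ R[[t]] is a formal power series such that h(t^m), viewed as an element of the field of formal Laurent series R((t)), is a rational function (i.e., equals a(t)/b(t) for polynomials a, b ∈ R[t] with b ≠ 0), then h(t) itself is a rational function of t. -/

import Mathlib

/-- Substitution `h(t) ↦ h(t^m)`: the power series whose coefficient of `t^(m*n)` is the
`n`-th coefficient of `h`, and whose other coefficients are zero. -/
noncomputable def psExpand {R : Type*} [CommRing R] (m : ℕ) (f : PowerSeries R) : PowerSeries R :=
  PowerSeries.mk fun k => if m ∣ k then PowerSeries.coeff (k / m) f else 0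

/-- A power series is a rational function of `t`: it equals a quotient `a(t)/b(t)` of
polynomials (equivalently, `f · b = a` with `b ≠ 0`). -/
def IsRationalPS {R : Type*} [CommRing R] (f : PowerSeries R) : Prop :=
  ∃ a b : Polynomial R, b ≠ 0 ∧ f * (b : PowerSeries R) = (a : PowerSeries R)

/-- Extract coefficients in arithmetic progression `m*n + r` from a polynomial. -/
noncomputable def polyExtract {R : Type*} [CommRing R] (m r : ℕ) (p : Polynomial R) : Polynomial R :=
  ∑ n ∈ Finset.range (p.natDegree + 1), Polynomial.monomial n (p.coeff (m * n + r))

lemma polyExtract_coeff {R : Type*} [CommRing R] (m r : ℕ) (hm : 0 < m) (p : Polynomial R)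
    (n : ℕ) : (polyExtract m r p).coeff n = p.coeff (m * n + r) := by
  simp only [polyExtract, Polynomial.finset_sum_coeff, Polynomial.coeff_monomial,
    Finset.sum_ite_eq', Finset.mem_range]
  split
  · rfl
  · next hn =>
    have : p.natDegree < m * n + r := by
      have h1 : n ≤ m * n := Nat.le_mul_of_pos_left n hm
      omega
    exact (Polynomial.coeff_eq_zero_of_natDegree_lt this).symm

lemma key {R : Type*} [CommRing R] (m : ℕ) (hm : 0 < m) (h : PowerSeries R) (b : Polynomial R)
    (r : ℕ) (hr : r < m) (n : ℕ) :
    PowerSeries.coeff n (h * (polyExtract m r b : PowerSeries R)) =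
    PowerSeries.coeff (m * n + r) (psExpand m h * (b : PowerSeries R)) := by
  rw [PowerSeries.coeff_mul, PowerSeries.coeff_mul,
    Finset.Nat.sum_antidiagonal_eq_sum_range_succ_mk,
    Finset.Nat.sum_antidiagonal_eq_sum_range_succ_mk]
  have : ∀ i ∈ Finset.range (m * n + r + 1),
      PowerSeries.coeff i (psExpand m h) * PowerSeries.coeff (m * n + r - i) (b : PowerSeries R)
      = if m ∣ i then PowerSeries.coeff (i / m) h * PowerSeries.coeff (m * n + r - i) (b : PowerSeries R) else 0 := by
    intro i _
    simp [psExpand, PowerSeries.coeff_mk, ite_mul]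
  rw [Finset.sum_congr rfl this, ← Finset.sum_filter]
  symm
  refine Finset.sum_nbij' (fun i => i / m) (fun i => m * i) ?_ ?_ ?_ ?_ ?_
  · intro i hi
    simp only [Finset.mem_filter, Finset.mem_range] at hi
    obtain ⟨hi1, q, hq⟩ := hi
    subst hq
    have hq : q < n + 1 := by
      by_contra hqn
      push_neg at hqn
      have h3 : m * (n + 1) ≤ m * q := Nat.mul_le_mul_left m hqn
      have h4 : m * (n + 1) = m * n + m := by ring
      omega
    simpa [Nat.mul_div_cancel_left q hm] using hq
  · intro i hi
    simp only [Finset.mem_range, Nat.lt_succ_iff] at hi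
    simp only [Finset.mem_filter, Finset.mem_range]
    refine ⟨by nlinarith, Dvd.intro i rfl⟩
  · intro i hi
    simp only [Finset.mem_filter, Finset.mem_range] at hi
    exact Nat.mul_div_cancel' hi.2
  · intro i _
    exact Nat.mul_div_cancel_left i hm
  · intro i hi
    simp only [Finset.mem_filter, Finset.mem_range] at hi
    obtain ⟨hi1, q, hq⟩ := hi
    subst hq
    have hq : q ≤ n := by
      by_contra hqn
      push_neg at hqn
      have : m * (n + 1) ≤ m * q := Nat.mul_le_mul_left m hqn
      have : m * (n + 1) = m * n + m := by ring
      omega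
    simp only [Nat.mul_div_cancel_left q hm, Polynomial.coeff_coe, polyExtract_coeff m r hm]
    congr 2
    have h2 : m * q ≤ m * n := Nat.mul_le_mul_left m hq
    rw [Nat.mul_sub]
    omega

/-- If `h(t^m)` is a rational function, then so is `h(t)`. -/
theorem rational_of_rational_expand {R : Type*} [CommRing R] [IsDomain R] (m : ℕ) (hm : 0 < m)
    (h : PowerSeries R) (H : IsRationalPS (psExpand m h)) : IsRationalPS h := by
  obtain ⟨a, b, hb, hab⟩ := H
  have hex : ∃ k, b.coeff k ≠ 0 := by
    by_contra hc
    push_neg at hc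
    exact hb (Polynomial.ext fun n => by simp [hc n])
  obtain ⟨k, hk⟩ := hex
  set r := k % m with hrdef
  have hr : r < m := Nat.mod_lt _ hm
  refine ⟨polyExtract m r a, polyExtract m r b, ?_, ?_⟩
  · intro h0
    apply hk
    have := polyExtract_coeff m r hm b (k / m)
    rw [h0] at this
    simp only [Polynomial.coeff_zero] at this
    rw [Nat.div_add_mod k m] at this
    exact this.symm
  · ext n
    rw [key m hm h b r hr n, hab, Polynomial.coeff_coe, Polynomial.coeff_coe,
      polyExtract_coeff m r hm]
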